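/- Let C be an [n,k] code over F_q with generator matrix (I_k | A) and let x, y ∈ F_q^{n−k} with (x,x) = (y,y) = (x,y) = 0. Then the code C(A(x,y)) with generator matrix (I_k | A(x,y)) is an LCD code if and only if C is an LCD code. -/

import Mathlib

open Matrix

/-- The dual code of a linear code `C`, with respect to the standard inner product. -/
def dualCode {F : Type*} [Field F] {ι : Type*} [Fintype ι]
    (C : Submodule F (ι → F)) : Submodule F (ι → F) where
  carrier := {x | ∀ c ∈ C, x ⬝ᵥ c = 0}
  zero_mem' := by intro c hc; simp
  add_mem' := by
    intro a b ha hb c hc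
    simp [add_dotProduct, ha c hc, hb c hc]
  smul_mem' := by
    intro t a ha c hc
    simp [smul_dotProduct, ha c hc]

/-- The matrix `A(x,y)` whose `i`-th row is `r_i + (r_i,y)x - (r_i,x)y`. -/
def rowOp {F : Type*} [Field F] {k m : ℕ} (A : Matrix (Fin k) (Fin m) F)
    (x y : Fin m → F) : Matrix (Fin k) (Fin m) F :=
  Matrix.of fun i => A i + (A i ⬝ᵥ y) • x - (A i ⬝ᵥ x) • y

/-- The code with generator matrix `(I_k | A)`, i.e. the row span of that matrix. -/
def genCode {F : Type*} [Field F] {k m : ℕ} (A : Matrix (Fin k) (Fin m) F) :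
    Submodule F (Fin k ⊕ Fin m → F) :=
  Submodule.span F (Set.range (Matrix.fromCols (1 : Matrix (Fin k) (Fin k) F) A))

/-!
Writing codewords of the row span of `M` as `Mᵀ *ᵥ u`, such a codeword is orthogonal to the
whole code exactly when `(M * Mᵀ) *ᵥ u = 0`, so being LCD depends only on the Gram matrix `M * Mᵀ`;
for `M = (I | A)` it is `1 + A * Aᵀ`, and the code is LCD iff that matrix is invertible. Expanding
`(r_i + (r_i,y)x - (r_i,x)y, r_j + (r_j,y)x - (r_j,x)y)`, every cross term cancels once
`(x,x) = (y,y) = (x,y) = 0`, so `A(x,y) * A(x,y)ᵀ = A * Aᵀ`.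
-/

section LCD

variable {F : Type*} [Field F] {ι κ : Type*}

def IsLCD [Fintype ι] (C : Submodule F (ι → F)) : Prop :=
  C ⊓ dualCode C = ⊥

lemma mem_dualCode_span_iff [Fintype ι] {S : Set (ι → F)} {v : ι → F} :
    v ∈ dualCode (Submodule.span F S) ↔ ∀ s ∈ S, v ⬝ᵥ s = 0 := by
  refine ⟨fun h s hs => h s (Submodule.subset_span hs), fun h c hc => ?_⟩
  induction hc using Submodule.span_induction with
  | mem c hc => exact h c hc
  | zero => exact dotProduct_zero v
  | add a b _ _ ha hb => rw [dotProduct_add, ha, hb, add_zero]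
  | smul t a _ ha => rw [dotProduct_smul, ha, smul_zero]

lemma mem_dualCode_span_range_row_iff [Fintype ι] (M : Matrix κ ι F) {v : ι → F} :
    v ∈ dualCode (Submodule.span F (Set.range M.row)) ↔ M *ᵥ v = 0 := by
  rw [mem_dualCode_span_iff, Set.forall_mem_range, funext_iff]
  simp only [row, mulVec, dotProduct_comm v, Pi.zero_apply]

lemma mem_span_range_row_iff [Fintype κ] (M : Matrix κ ι F) {v : ι → F} :
    v ∈ Submodule.span F (Set.range M.row) ↔ ∃ u, Mᵀ *ᵥ u = v := by
  simp_rw [← range_vecMulLinear, LinearMap.mem_range, vecMulLinear_apply, ← vecMul_transpose,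
    transpose_transpose]

lemma isLCD_span_range_row_iff [Fintype ι] [Fintype κ] (M : Matrix κ ι F) :
    IsLCD (Submodule.span F (Set.range M.row)) ↔
      ∀ u : κ → F, (M * Mᵀ) *ᵥ u = 0 → Mᵀ *ᵥ u = 0 := by
  simp only [IsLCD, Submodule.eq_bot_iff, Submodule.mem_inf, mem_dualCode_span_range_row_iff,
    mem_span_range_row_iff]
  constructor
  · intro h u hu
    exact h _ ⟨⟨u, rfl⟩, by rwa [mulVec_mulVec]⟩
  · rintro h _ ⟨⟨u, rfl⟩, hu⟩
    exact h u (by rwa [← mulVec_mulVec])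

end LCD

lemma fromRows_one_mulVec_eq_zero_iff {R : Type*} [CommRing R] {κ ι : Type*}
    [Fintype κ] [DecidableEq κ] (B : Matrix ι κ R) (u : κ → R) :
    fromRows (1 : Matrix κ κ R) B *ᵥ u = 0 ↔ u = 0 := by
  rw [fromRows_mulVec, one_mulVec]
  refine ⟨fun h => funext fun i => congrFun h (Sum.inl i), ?_⟩
  rintro rfl
  rw [mulVec_zero, Sum.elim_zero_zero]

lemma isLCD_genCode_iff {F : Type*} [Field F] {k m : ℕ} (A : Matrix (Fin k) (Fin m) F) :
    IsLCD (genCode A) ↔ IsUnit (1 + A * Aᵀ) := by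
  refine (isLCD_span_range_row_iff (fromCols 1 A)).trans ?_
  rw [transpose_fromCols, fromCols_mul_fromRows,
    transpose_one, mul_one, ← mulVec_injective_iff_isUnit, ← coe_mulVecLin,
    injective_iff_map_eq_zero]
  simp only [mulVecLin_apply, fromRows_one_mulVec_eq_zero_iff]

lemma rowOp_mul_transpose {F : Type*} [Field F] {k m : ℕ}
    (A : Matrix (Fin k) (Fin m) F) (x y : Fin m → F)
    (hx : x ⬝ᵥ x = 0) (hy : y ⬝ᵥ y = 0) (hxy : x ⬝ᵥ y = 0) :
    rowOp A x y * (rowOp A x y)ᵀ = A * Aᵀ := by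
  have hyx : y ⬝ᵥ x = 0 := by rwa [dotProduct_comm]
  ext i j
  change (A i + (A i ⬝ᵥ y) • x - (A i ⬝ᵥ x) • y) ⬝ᵥ (A j + (A j ⬝ᵥ y) • x - (A j ⬝ᵥ x) • y) =
    A i ⬝ᵥ A j
  simp only [add_dotProduct, sub_dotProduct, smul_dotProduct, dotProduct_add,
    dotProduct_sub, dotProduct_smul, smul_eq_mul, hx, hy, hxy, hyx,
    dotProduct_comm x (A j), dotProduct_comm y (A j)]
  ring

theorem rowOp_lcd_iff_general
    {F : Type*} [Field F] {k m : ℕ}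
    (A : Matrix (Fin k) (Fin m) F) (x y : Fin m → F)
    (hx : x ⬝ᵥ x = 0) (hy : y ⬝ᵥ y = 0) (hxy : x ⬝ᵥ y = 0) :
    genCode (rowOp A x y) ⊓ dualCode (genCode (rowOp A x y)) = ⊥ ↔
      genCode A ⊓ dualCode (genCode A) = ⊥ := by
  change IsLCD _ ↔ IsLCD _
  rw [isLCD_genCode_iff, isLCD_genCode_iff, rowOp_mul_transpose A x y hx hy hxy]

theorem rowOp_lcd_iff
    {F : Type*} [Field F] [Fintype F] {k m : ℕ}
    (A : Matrix (Fin k) (Fin m) F) (x y : Fin m → F)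
    (hx : x ⬝ᵥ x = 0) (hy : y ⬝ᵥ y = 0) (hxy : x ⬝ᵥ y = 0) :
    genCode (rowOp A x y) ⊓ dualCode (genCode (rowOp A x y)) = ⊥ ↔
      genCode A ⊓ dualCode (genCode A) = ⊥ :=
  rowOp_lcd_iff_general A x y hx hy hxy
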